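/- arXiv:2205.06979 — 2 statements merged into one kernel-verified Lean document; each statement's English description precedes it below -/
import Mathlib

section
/- Let F : ℝⁿ → ℝⁿ be continuous, monotone, and L_F-Lipschitz with nonempty zero set, and let g be differentiable, μ_g-strongly convex, with L₁-Lipschitz gradient. Let x* be the unique minimizer of g over {x : F(x) = 0}, and for each k let x*_{η_k} be the unique zero of F + η_k ∇g, where η_k > 0, η_k → 0. Then x*_{η_k} → x* as k → ∞. -/
/-!
Monotonicity of `F` between `x_η` and `x*` gives `⟪∇g x_η, x* - x_η⟫ ≥ 0`, so the
first-order inequality of `μ`-strong convexity yields `g x_η + μ/2 ‖x* - x_η‖² ≤ g x*`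
along the whole trajectory. This keeps the trajectory in a ball around `x*`. At any
limit point `a` of it, `F a = lim (-η ∇g x_η) = 0`, hence `g x* ≤ g a`, and the
inequality in the limit forces `a = x*`.
-/

open Filter Set Metric Topology
open scoped RealInnerProductSpace

lemma ConvexOn.add_apply_sub_le_of_hasFDerivAt {E : Type*} [NormedAddCommGroup E]
    [NormedSpace ℝ E] {s : Set E} {f : E → ℝ} {f' : E →L[ℝ] ℝ} {x y : E}
    (hf : ConvexOn ℝ s f) (hx : x ∈ s) (hy : y ∈ s) (hf' : HasFDerivAt f f' x) :
    f x + f' (y - x) ≤ f y := by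
  set γ := AffineMap.lineMap (k := ℝ) x y
  have hγ : ConvexOn ℝ (γ ⁻¹' s) (f ∘ γ) := hf.comp_affineMap γ
  have hderiv : HasDerivAt (f ∘ γ) (f' (y - x)) 0 :=
    hf'.comp_hasDerivAt_of_eq 0 AffineMap.hasDerivAt_lineMap (by simp [γ])
  have hslope := hγ.le_slope_of_hasDerivAt (by simpa [γ] using hx) (by simpa [γ] using hy)
    one_pos hderiv
  simp only [slope_def_field, Function.comp_apply, γ, AffineMap.lineMap_apply_zero,
    AffineMap.lineMap_apply_one, sub_zero, div_one] at hslope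
  linarith

section

variable {E : Type*} [NormedAddCommGroup E] [InnerProductSpace ℝ E] {g : E → ℝ} {m : ℝ}

lemma StrongConvexOn.add_inner_add_sq_le_of_hasGradientAt [CompleteSpace E] {s : Set E}
    {g' x y : E} (hg : StrongConvexOn s m g) (hx : x ∈ s) (hy : y ∈ s)
    (hg' : HasGradientAt g g' x) :
    g x + ⟪g', y - x⟫ + m / 2 * ‖y - x‖ ^ 2 ≤ g y := by
  have hderiv := (hasGradientAt_iff_hasFDerivAt.mp hg').sub
    ((hasStrictFDerivAt_norm_sq x).hasFDerivAt.const_mul (m / 2))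
  have hfirst :=
    (strongConvexOn_iff_convex.mp hg).add_apply_sub_le_of_hasFDerivAt hx hy hderiv
  simp only [sub_apply, smul_apply, InnerProductSpace.toDual_apply_apply, innerSL_apply_apply,
    smul_eq_mul, nsmul_eq_mul, inner_sub_right, real_inner_self_eq_norm_sq] at hfirst
  rw [norm_sub_sq_real, inner_sub_right, real_inner_comm x y]
  push_cast at hfirst
  linarith

lemma norm_sub_le_of_add_sq_le [CompleteSpace E] {g' x x₀ : E}
    (hg : StrongConvexOn univ m g) (hm : 0 < m) (hg' : HasGradientAt g g' x₀)
    (hx : g x + m / 2 * ‖x₀ - x‖ ^ 2 ≤ g x₀) :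
    ‖x - x₀‖ ≤ ‖g'‖ / m := by
  have hfirst := hg.add_inner_add_sq_le_of_hasGradientAt (mem_univ x₀) (mem_univ x) hg'
  have hcs : -⟪g', x - x₀⟫ ≤ ‖g'‖ * ‖x - x₀‖ :=
    (neg_le_abs _).trans (abs_real_inner_le_norm _ _)
  rw [norm_sub_rev x₀ x] at hx
  rcases (norm_nonneg (x - x₀)).eq_or_lt with h0 | hpos
  · rw [← h0]
    positivity
  · rw [le_div_iff₀ hm]
    nlinarith

variable {F : E → E} {x₀ : E}

lemma inner_sub_nonneg_of_add_smul_eq_zero {v x : E} {η : ℝ}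
    (hF : ∀ x y, 0 ≤ ⟪F x - F y, x - y⟫) (hx₀ : F x₀ = 0) (hη : 0 < η)
    (hx : F x + η • v = 0) : 0 ≤ ⟪v, x₀ - x⟫ := by
  have h := hF x x₀
  rw [hx₀, sub_zero, eq_neg_of_add_eq_zero_left hx, inner_neg_left, real_inner_smul_left,
    ← neg_sub x₀ x, inner_neg_right, mul_neg, neg_neg] at h
  exact (mul_nonneg_iff_of_pos_left hη).mp h

lemma add_sq_le_of_add_smul_eq_zero [CompleteSpace E] {v x : E} {η : ℝ}
    (hF : ∀ x y, 0 ≤ ⟪F x - F y, x - y⟫) (hx₀ : F x₀ = 0) (hg : StrongConvexOn univ m g)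
    (hgx : HasGradientAt g v x) (hη : 0 < η) (hx : F x + η • v = 0) :
    g x + m / 2 * ‖x₀ - x‖ ^ 2 ≤ g x₀ := by
  linarith [hg.add_inner_add_sq_le_of_hasGradientAt (mem_univ x) (mem_univ x₀) hgx,
    inner_sub_nonneg_of_add_smul_eq_zero hF hx₀ hη hx]

lemma eq_of_tendsto_of_add_smul_eq_zero {ι : Type*} {l : Filter ι} [l.NeBot] {g' : E → E}
    {y : ι → E} {ε : ι → ℝ} {a : E} (hF : Continuous F) (hg : Continuous g)
    (hg' : Continuous g') (hm : 0 < m) (hx₀ : ∀ x, F x = 0 → g x₀ ≤ g x)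
    (hy : Tendsto y l (𝓝 a)) (hε : Tendsto ε l (𝓝 0))
    (hzero : ∀ i, F (y i) + ε i • g' (y i) = 0)
    (hle : ∀ i, g (y i) + m / 2 * ‖x₀ - y i‖ ^ 2 ≤ g x₀) : a = x₀ := by
  have hFa : F a = 0 := by
    have hlim := (hε.smul ((hg'.tendsto a).comp hy)).neg
    rw [zero_smul, neg_zero] at hlim
    refine tendsto_nhds_unique ((hF.tendsto a).comp hy) (hlim.congr fun i => ?_)
    exact (eq_neg_of_add_eq_zero_left (hzero i)).symm
  have hlim : g a + m / 2 * ‖x₀ - a‖ ^ 2 ≤ g x₀ :=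
    le_of_tendsto' (((hg.add (continuous_const.mul
      ((continuous_const.sub continuous_id).norm.pow 2))).tendsto a).comp hy) hle
  have hsq : ‖x₀ - a‖ ^ 2 ≤ 0 := by nlinarith [hx₀ a hFa]
  have hnorm : ‖x₀ - a‖ = 0 :=
    (pow_eq_zero_iff two_ne_zero).mp (le_antisymm hsq (by positivity))
  exact (sub_eq_zero.mp (norm_eq_zero.mp hnorm)).symm

end

theorem tikhonov_trajectory_converges_general
    (n : ℕ) (F : EuclideanSpace ℝ (Fin n) → EuclideanSpace ℝ (Fin n))
    (hFcont : Continuous F)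
    (hFmono : ∀ x y, (0 : ℝ) ≤ inner ℝ (F x - F y) (x - y))
    (g : EuclideanSpace ℝ (Fin n) → ℝ)
    (gradg : EuclideanSpace ℝ (Fin n) → EuclideanSpace ℝ (Fin n))
    (hg : ∀ x, HasGradientAt g (gradg x) x)
    (μg : ℝ) (hμg : 0 < μg)
    (hgconv : StrongConvexOn Set.univ μg g)
    (L₁ : NNReal) (hglip : LipschitzWith L₁ gradg)
    (xs : EuclideanSpace ℝ (Fin n))
    (hxs : F xs = 0) (hxsmin : ∀ x, F x = 0 → g xs ≤ g x)
    (η : ℕ → ℝ) (hηpos : ∀ k, 0 < η k) (hηlim : Tendsto η atTop (nhds 0))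
    (xη : ℕ → EuclideanSpace ℝ (Fin n))
    (hxη : ∀ k, F (xη k) + η k • gradg (xη k) = 0) :
    Tendsto xη atTop (nhds xs) := by
  have hgc : Continuous g := continuous_iff_continuousAt.2 fun x => (hg x).continuousAt
  have hle : ∀ k, g (xη k) + μg / 2 * ‖xs - xη k‖ ^ 2 ≤ g xs := fun k =>
    add_sq_le_of_add_smul_eq_zero hFmono hxs hgconv (hg _) (hηpos k) (hxη k)
  have hball : ∀ k, xη k ∈ closedBall xs (‖gradg xs‖ / μg) := fun k => by
    rw [mem_closedBall, dist_eq_norm]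
    exact norm_sub_le_of_add_sq_le hgconv hμg (hg xs) (hle k)
  refine tendsto_of_subseq_tendsto fun ns hns => ?_
  obtain ⟨a, -, φ, hφ, hlim⟩ := tendsto_subseq_of_bounded isBounded_closedBall
    fun i => hball (ns i)
  have hsub : Tendsto (ns ∘ φ) atTop atTop := hns.comp hφ.tendsto_atTop
  obtain rfl : a = xs := eq_of_tendsto_of_add_smul_eq_zero hFcont hgc hglip.continuous hμg
    hxsmin hlim (hηlim.comp hsub) (fun i => hxη _) (fun i => hle _)
  exact ⟨φ, hlim⟩

theorem tikhonov_trajectory_converges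
    (n : ℕ) (F : EuclideanSpace ℝ (Fin n) → EuclideanSpace ℝ (Fin n))
    (hFcont : Continuous F)
    (hFmono : ∀ x y, (0 : ℝ) ≤ inner ℝ (F x - F y) (x - y))
    (LF : NNReal) (hFlip : LipschitzWith LF F)
    (g : EuclideanSpace ℝ (Fin n) → ℝ)
    (gradg : EuclideanSpace ℝ (Fin n) → EuclideanSpace ℝ (Fin n))
    (hg : ∀ x, HasGradientAt g (gradg x) x)
    (μg : ℝ) (hμg : 0 < μg)
    (hgconv : StrongConvexOn Set.univ μg g)
    (L₁ : NNReal) (hglip : LipschitzWith L₁ gradg)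
    (xs : EuclideanSpace ℝ (Fin n))
    (hxs : F xs = 0) (hxsmin : ∀ x, F x = 0 → g xs ≤ g x)
    (η : ℕ → ℝ) (hηpos : ∀ k, 0 < η k) (hηlim : Tendsto η atTop (nhds 0))
    (xη : ℕ → EuclideanSpace ℝ (Fin n))
    (hxη : ∀ k, F (xη k) + η k • gradg (xη k) = 0)
    (hxηuniq : ∀ k y, F y + η k • gradg y = 0 → y = xη k) :
    Tendsto xη atTop (nhds xs) :=
  tikhonov_trajectory_converges_general n F hFcont hFmono g gradg hg μg hμg hgconv L₁ hglip xs hxs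
    hxsmin η hηpos hηlim xη hxη
end

section
/- Let T_η = F + η∇g where F is monotone and ∇g is μ_g-strongly monotone and L₁-Lipschitz, and let x*_η denote the unique zero of T_η. Suppose additionally ‖∇g(x*_η)‖ ≤ C for all η in an interval. Then for η, η' > 0 in that interval, ‖x*_η − x*_{η'}‖ ≤ (C/μ_g)·|1 − η'/η|. -/
open RealInnerProductSpace

section TikhonovZeros

variable {E : Type*} [NormedAddCommGroup E] [InnerProductSpace ℝ E]
  {F G : E → E} {μ η η' : ℝ} {a b : E}

/-- Testing the monotonicity of `F` at the zeros `a` of `F + η • G` and `b` of `F + η' • G`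
moves all of `F` onto `G`; strong monotonicity of `G` then bounds the left-hand side. -/
theorem mul_sq_norm_sub_le_of_regularized_zeros
    (hF : ∀ x y, 0 ≤ ⟪F x - F y, x - y⟫)
    (hG : ∀ x y, μ * ‖x - y‖ ^ 2 ≤ ⟪G x - G y, x - y⟫) (hη : 0 ≤ η)
    (ha : F a + η • G a = 0) (hb : F b + η' • G b = 0) :
    η * μ * ‖a - b‖ ^ 2 ≤ (η' - η) * ⟪G b, a - b⟫ := by
  have hFab : ⟪F a - F b, a - b⟫ = -(η * ⟪G a - G b, a - b⟫) + (η' - η) * ⟪G b, a - b⟫ := by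
    rw [eq_neg_of_add_eq_zero_left ha, eq_neg_of_add_eq_zero_left hb, inner_sub_left,
      inner_sub_left, inner_neg_left, inner_neg_left, real_inner_smul_left,
      real_inner_smul_left]
    ring
  calc η * μ * ‖a - b‖ ^ 2 = η * (μ * ‖a - b‖ ^ 2) := mul_assoc _ _ _
    _ ≤ η * ⟪G a - G b, a - b⟫ := mul_le_mul_of_nonneg_left (hG a b) hη
    _ ≤ (η' - η) * ⟪G b, a - b⟫ := by linarith [hF a b]

theorem norm_sub_le_of_regularized_zeros (hμ : 0 < μ) (hη : 0 < η)
    (hF : ∀ x y, 0 ≤ ⟪F x - F y, x - y⟫)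
    (hG : ∀ x y, μ * ‖x - y‖ ^ 2 ≤ ⟪G x - G y, x - y⟫)
    (ha : F a + η • G a = 0) (hb : F b + η' • G b = 0) :
    ‖a - b‖ ≤ |η - η'| * ‖G b‖ / (η * μ) := by
  have hsq : η * μ * ‖a - b‖ ^ 2 ≤ |η - η'| * ‖G b‖ * ‖a - b‖ :=
    calc η * μ * ‖a - b‖ ^ 2 ≤ (η' - η) * ⟪G b, a - b⟫ :=
          mul_sq_norm_sub_le_of_regularized_zeros hF hG hη.le ha hb
      _ ≤ |(η' - η) * ⟪G b, a - b⟫| := le_abs_self _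
      _ ≤ |η - η'| * (‖G b‖ * ‖a - b‖) := by
          rw [abs_mul, abs_sub_comm]
          exact mul_le_mul_of_nonneg_left (abs_real_inner_le_norm _ _) (abs_nonneg _)
      _ = |η - η'| * ‖G b‖ * ‖a - b‖ := (mul_assoc _ _ _).symm
  rw [le_div_iff₀ (mul_pos hη hμ)]
  rcases (norm_nonneg (a - b)).eq_or_lt with hab | hab
  · rw [← hab, zero_mul]
    positivity
  · nlinarith

end TikhonovZeros

theorem tikhonov_trajectory_increment_bound_general
    (n : ℕ) (F gradg : EuclideanSpace ℝ (Fin n) → EuclideanSpace ℝ (Fin n))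
    (μg C : ℝ) (hμg : 0 < μg)
    (hFmono : ∀ x y, (0 : ℝ) ≤ inner ℝ (F x - F y) (x - y))
    (hgmono : ∀ x y, μg * ‖x - y‖ ^ 2 ≤ inner ℝ (gradg x - gradg y) (x - y))
    (s : Set ℝ) (hs : ∀ η ∈ s, 0 < η)
    (x : ℝ → EuclideanSpace ℝ (Fin n))
    (hx : ∀ η ∈ s, F (x η) + η • gradg (x η) = 0)
    (hC : ∀ η ∈ s, ‖gradg (x η)‖ ≤ C) :
    ∀ η ∈ s, ∀ η' ∈ s, ‖x η - x η'‖ ≤ (C / μg) * |1 - η' / η| := by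
  intro η hη η' hη'
  have hη0 := hs η hη
  calc ‖x η - x η'‖ ≤ |η - η'| * ‖gradg (x η')‖ / (η * μg) :=
        norm_sub_le_of_regularized_zeros hμg hη0 hFmono hgmono (hx η hη) (hx η' hη')
    _ ≤ |η - η'| * C / (η * μg) := by gcongr; exact hC η' hη'
    _ = (C / μg) * |1 - η' / η| := by
        rw [one_sub_div hη0.ne', abs_div, abs_of_pos hη0]
        field_simp

theorem tikhonov_trajectory_increment_bound
    (n : ℕ) (F gradg : EuclideanSpace ℝ (Fin n) → EuclideanSpace ℝ (Fin n))
    (μg L₁ C : ℝ) (hμg : 0 < μg)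
    (hFmono : ∀ x y, (0 : ℝ) ≤ inner ℝ (F x - F y) (x - y))
    (hgmono : ∀ x y, μg * ‖x - y‖ ^ 2 ≤ inner ℝ (gradg x - gradg y) (x - y))
    (hglip : ∀ x y, ‖gradg x - gradg y‖ ≤ L₁ * ‖x - y‖)
    (s : Set ℝ) (hs : ∀ η ∈ s, 0 < η)
    (x : ℝ → EuclideanSpace ℝ (Fin n))
    (hx : ∀ η ∈ s, F (x η) + η • gradg (x η) = 0)
    (hC : ∀ η ∈ s, ‖gradg (x η)‖ ≤ C) :
    ∀ η ∈ s, ∀ η' ∈ s, ‖x η - x η'‖ ≤ (C / μg) * |1 - η' / η| :=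
  tikhonov_trajectory_increment_bound_general n F gradg μg C hμg hFmono hgmono s hs x hx hC
end
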